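/- (Antipodal chord length.) For every integer k ≥ 1 and every real θ, the antipodal difference vector d_k(θ) = x(θ) − x(θ+π) of the Fourier curve satisfies ‖d_k(θ)‖² = 4·⌈k/2⌉/k. -/

import Mathlib

/-!
Pair the coordinates of `x(θ) - x(θ + π)` by frequency. Frequency `m` contributes
`(cos mθ - cos m(θ + π))² + (sin mθ - sin m(θ + π))² = 2 - 2 cos mπ`, which is `4` for odd `m`
and `0` for even `m`; among `1, …, k` there are `⌈k/2⌉` odd frequencies, and the prefactor
`1/√k` supplies the division by `k`.
-/

open Real

/-- The Fourier curve `x(θ) = (1/√k)(cos θ, sin θ, cos 2θ, sin 2θ, …, cos kθ, sin kθ)`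
in `ℝ^{2k}`: coordinate `2(m-1)` is `cos(mθ)/√k` and coordinate `2m-1` is `sin(mθ)/√k`. -/
noncomputable def fourierCurve (k : ℕ) (θ : ℝ) : EuclideanSpace ℝ (Fin (2 * k)) :=
  WithLp.toLp 2 fun i => (Real.sqrt k)⁻¹ *
    (if (i : ℕ) % 2 = 0 then Real.cos ((((i : ℕ) / 2 + 1 : ℕ) : ℝ) * θ)
     else Real.sin ((((i : ℕ) / 2 + 1 : ℕ) : ℝ) * θ))

open Finset

theorem Finset.sum_range_two_mul {M : Type*} [AddCommMonoid M] (f : ℕ → M) (k : ℕ) :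
    ∑ i ∈ range (2 * k), f i = ∑ m ∈ range k, (f (2 * m) + f (2 * m + 1)) := by
  induction k with
  | zero => simp
  | succ k ih => rw [Nat.mul_succ, sum_range_succ, sum_range_succ, sum_range_succ, ih, add_assoc]

theorem Real.sq_sub_cos_add_sq_sub_sin (a b : ℝ) :
    (cos a - cos b) ^ 2 + (sin a - sin b) ^ 2 = 2 - 2 * cos (a - b) := by
  rw [cos_sub]
  linear_combination sin_sq_add_cos_sq a + sin_sq_add_cos_sq b

theorem Real.sq_sub_cos_add_sq_sub_sin_nat_mul_add_pi (n : ℕ) (θ : ℝ) :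
    (cos (n * θ) - cos (n * (θ + π))) ^ 2 + (sin (n * θ) - sin (n * (θ + π))) ^ 2
      = 2 - 2 * (-1) ^ n := by
  rw [sq_sub_cos_add_sq_sub_sin, show n * θ - n * (θ + π) = -(n * π) by ring, cos_neg,
    cos_nat_mul_pi]

theorem sum_range_two_sub_two_mul_neg_one_pow_succ (k : ℕ) :
    ∑ m ∈ range k, (2 - 2 * (-1 : ℝ) ^ (m + 1)) = 4 * ((k + 1) / 2 : ℕ) := by
  rw [sum_sub_distrib, ← mul_sum, sum_const, card_range, nsmul_eq_mul]
  simp_rw [pow_succ, ← sum_mul, neg_one_geom_sum]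
  rcases Nat.even_or_odd' k with ⟨j, rfl | rfl⟩
  · rw [if_pos (even_two_mul j), show (2 * j + 1) / 2 = j by omega]
    push_cast; ring
  · rw [if_neg (Nat.not_even_iff_odd.2 (odd_two_mul_add_one j)),
      show (2 * j + 1 + 1) / 2 = j + 1 by omega]
    push_cast; ring

theorem Int.ceil_natCast_div_two {K : Type*} [Field K] [LinearOrder K] [IsStrictOrderedRing K]
    [FloorRing K] (k : ℕ) : ⌈(k : K) / 2⌉ = ((k + 1) / 2 : ℕ) := by
  have h₁ : k ≤ 2 * ((k + 1) / 2) := by omega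
  have h₂ : 2 * ((k + 1) / 2) ≤ k + 1 := by omega
  generalize (k + 1) / 2 = n at *
  rw [Int.ceil_eq_iff, Int.cast_natCast]
  have h₁' : (k : K) ≤ 2 * n := by exact_mod_cast h₁
  have h₂' : 2 * (n : K) ≤ k + 1 := by exact_mod_cast h₂
  constructor <;> linarith

theorem norm_fourierCurve_sub_sq (k : ℕ) (θ φ : ℝ) :
    ‖fourierCurve k θ - fourierCurve k φ‖ ^ 2 = (k : ℝ)⁻¹ * ∑ m ∈ range k,
      ((cos ((m + 1 : ℕ) * θ) - cos ((m + 1 : ℕ) * φ)) ^ 2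
        + (sin ((m + 1 : ℕ) * θ) - sin ((m + 1 : ℕ) * φ)) ^ 2) := by
  let g (i : ℕ) : ℝ :=
    if i % 2 = 0 then (cos ((i / 2 + 1 : ℕ) * θ) - cos ((i / 2 + 1 : ℕ) * φ)) ^ 2
    else (sin ((i / 2 + 1 : ℕ) * θ) - sin ((i / 2 + 1 : ℕ) * φ)) ^ 2
  have hcoord (i : Fin (2 * k)) :
      ‖(fourierCurve k θ - fourierCurve k φ) i‖ ^ 2 = (k : ℝ)⁻¹ * g i := by
    simp only [fourierCurve, PiLp.sub_apply, Real.norm_eq_abs, sq_abs, g, ← mul_sub, mul_pow,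
      inv_pow, sq_sqrt k.cast_nonneg]
    split_ifs <;> rfl
  rw [EuclideanSpace.norm_sq_eq, sum_congr rfl fun i _ => hcoord i, ← mul_sum,
    Fin.sum_univ_eq_sum_range g, sum_range_two_mul]
  congr 2 with m
  have hodd : (2 * m + 1) % 2 ≠ 0 := by omega
  simp only [g, if_pos (Nat.mul_mod_right 2 m), if_neg hodd, Nat.mul_div_cancel_left m two_pos,
    show (2 * m + 1) / 2 = m by omega]

theorem antipodal_chord_length_general (k : ℕ) (θ : ℝ) :
    ‖fourierCurve k θ - fourierCurve k (θ + Real.pi)‖ ^ 2 =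
      4 * (⌈(k : ℝ) / 2⌉ : ℝ) / (k : ℝ) := by
  rw [norm_fourierCurve_sub_sq, Int.ceil_natCast_div_two, Int.cast_natCast,
    ← sum_range_two_sub_two_mul_neg_one_pow_succ, inv_mul_eq_div]
  simp_rw [sq_sub_cos_add_sq_sub_sin_nat_mul_add_pi]

/-- antipodal chord length: `‖x(θ) − x(θ+π)‖² = 4⌈k/2⌉/k`. -/
theorem antipodal_chord_length (k : ℕ) (hk : 1 ≤ k) (θ : ℝ) :
    ‖fourierCurve k θ - fourierCurve k (θ + Real.pi)‖ ^ 2 =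
      4 * (⌈(k : ℝ) / 2⌉ : ℝ) / (k : ℝ) :=
  antipodal_chord_length_general k θ
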